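/- Let N be a norm on ℝ^m with dual norm N_*, let V be a symmetric positive definite real m×m matrix, let ε ≥ 0, and set C := sup { ‖w‖_{V⁻¹} : w ∈ ℝ^m, N(w) ≤ 1 }. Then for all x̌, θ, θ' ∈ ℝ^m, | (⟨x̌, θ⟩ − ε·N_*(θ)) − (⟨x̌, θ'⟩ − ε·N_*(θ')) | ≤ ( ‖x̌‖_{V⁻¹} + ε·C ) · ‖θ − θ'‖_V. -/

import Mathlib

/-!
Cauchy–Schwarz for the form of `V⁻¹`, applied to `x` and `V y`, gives
`|⟨x, y⟩| ≤ ‖x‖_{V⁻¹} ‖y‖_V`. This bounds the linear part, and it also shows that every `v`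
in the unit ball of `N` satisfies `⟨v, θ⟩ ≤ ⟨v, θ'⟩ + C ‖θ - θ'‖_V`; taking suprema over `v`
makes `N_*` `C`-Lipschitz for `‖·‖_V`. The constant `C` is a genuine supremum (not the junk
value of `sSup` on an unbounded set) because the unit ball of `N` is bounded: `N` is a
seminorm, hence continuous in finite dimension, and its minimum on the Euclidean unit sphere
is positive.
-/

/-- Euclidean dot product on `ℝ^m`. -/
def dotp {m : ℕ} (v w : Fin m → ℝ) : ℝ := ∑ i, v i * w i

/-- Dual norm of a norm `N` on `ℝ^m`: `N_*(θ) = sup { ⟨v, θ⟩ : N v ≤ 1 }`. -/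
noncomputable def dualN {m : ℕ} (N : (Fin m → ℝ) → ℝ) (θ : Fin m → ℝ) : ℝ :=
  sSup ((fun v => dotp v θ) '' {v | N v ≤ 1})

/-- The Mahalanobis-type norm `‖u‖_V = √(uᵀ V u)` associated with a matrix `V`. -/
noncomputable def normV {m : ℕ} (V : Matrix (Fin m) (Fin m) ℝ) (u : Fin m → ℝ) : ℝ :=
  Real.sqrt (dotp u (V.mulVec u))

open Matrix

theorem Matrix.PosSemidef.sq_dotProduct_mulVec_le {n : Type*} [Fintype n] {M : Matrix n n ℝ}
    (hM : M.PosSemidef) (x y : n → ℝ) :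
    (x ⬝ᵥ M *ᵥ y) ^ 2 ≤ (x ⬝ᵥ M *ᵥ x) * (y ⬝ᵥ M *ᵥ y) := by
  classical
  have hsymm : y ⬝ᵥ M *ᵥ x = x ⬝ᵥ M *ᵥ y := by
    rw [dotProduct_mulVec, ← mulVec_transpose, (isHermitian_iff_isSymm.mp hM.isHermitian).eq,
      dotProduct_comm]
  have hCS := (toBilin' M).apply_mul_apply_le_of_forall_zero_le
    (fun z => by simpa [toBilin'_apply'] using hM.dotProduct_mulVec_nonneg z) x y
  simpa only [toBilin'_apply', hsymm, sq] using hCS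

theorem Matrix.nonsing_inv_mulVec_mulVec {n R : Type*} [Fintype n] [DecidableEq n] [CommRing R]
    (A : Matrix n n R) (h : IsUnit A.det) (y : n → R) : A⁻¹ *ᵥ A *ᵥ y = y := by
  rw [mulVec_mulVec, nonsing_inv_mul A h, one_mulVec]

theorem Seminorm.exists_pos_mul_norm_le {E : Type*} [NormedAddCommGroup E] [NormedSpace ℝ E]
    [FiniteDimensional ℝ E] (p : Seminorm ℝ E) (hp : ∀ x, p x = 0 → x = 0) :
    ∃ c > 0, ∀ x, c * ‖x‖ ≤ p x := by
  rcases subsingleton_or_nontrivial E with _ | _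
  · exact ⟨1, one_pos, fun x => by simp [Subsingleton.elim x 0]⟩
  obtain ⟨u, hu, hmin⟩ := (isCompact_sphere (0 : E) 1).exists_isMinOn
    (NormedSpace.sphere_nonempty.mpr zero_le_one)
    p.convexOn.locallyLipschitz.continuous.continuousOn
  have hu0 : u ≠ 0 := ne_zero_of_mem_unit_sphere ⟨u, hu⟩
  refine ⟨p u, (apply_nonneg p u).lt_of_ne' (mt (hp u) hu0), fun x => ?_⟩
  rcases eq_or_ne x 0 with rfl | hx
  · simp
  have hx' : 0 < ‖x‖ := norm_pos_iff.mpr hx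
  have hmem : ‖x‖⁻¹ • x ∈ Metric.sphere (0 : E) 1 := by simp [norm_smul, hx'.ne']
  have hux : p u ≤ ‖x‖⁻¹ * p x := by simpa [map_smul_eq_mul] using hmin hmem
  rwa [← div_eq_inv_mul, le_div_iff₀ hx'] at hux

section NormV

variable {m : ℕ}

theorem dotp_eq_dotProduct (v w : Fin m → ℝ) : dotp v w = v ⬝ᵥ w := rfl

theorem normV_nonneg (W : Matrix (Fin m) (Fin m) ℝ) (u : Fin m → ℝ) : 0 ≤ normV W u :=
  Real.sqrt_nonneg _

theorem normV_sub_comm (W : Matrix (Fin m) (Fin m) ℝ) (u w : Fin m → ℝ) :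
    normV W (u - w) = normV W (w - u) := by
  rw [← neg_sub, normV, normV, dotp_eq_dotProduct, dotp_eq_dotProduct, mulVec_neg,
    neg_dotProduct_neg]

theorem continuous_normV (W : Matrix (Fin m) (Fin m) ℝ) : Continuous (normV W) := by
  unfold normV dotp
  fun_prop

theorem abs_dotProduct_mulVec_le_normV_mul_normV {W : Matrix (Fin m) (Fin m) ℝ}
    (hW : W.PosSemidef) (x y : Fin m → ℝ) :
    |x ⬝ᵥ W *ᵥ y| ≤ normV W x * normV W y := by
  have hx : 0 ≤ x ⬝ᵥ W *ᵥ x := by simpa using hW.dotProduct_mulVec_nonneg x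
  rw [normV, normV, dotp_eq_dotProduct, dotp_eq_dotProduct, ← Real.sqrt_mul hx]
  exact Real.abs_le_sqrt (hW.sq_dotProduct_mulVec_le x y)

theorem normV_inv_mulVec {V : Matrix (Fin m) (Fin m) ℝ} (hV : V.PosDef) (y : Fin m → ℝ) :
    normV V⁻¹ (V *ᵥ y) = normV V y := by
  rw [normV, normV, dotp_eq_dotProduct, dotp_eq_dotProduct,
    nonsing_inv_mulVec_mulVec V ((isUnit_iff_isUnit_det V).mp hV.isUnit), dotProduct_comm]

theorem abs_dotp_le_normV_inv_mul_normV {V : Matrix (Fin m) (Fin m) ℝ} (hV : V.PosDef)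
    (x y : Fin m → ℝ) : |dotp x y| ≤ normV V⁻¹ x * normV V y := by
  calc |dotp x y| = |x ⬝ᵥ V⁻¹ *ᵥ V *ᵥ y| := by
        rw [nonsing_inv_mulVec_mulVec V ((isUnit_iff_isUnit_det V).mp hV.isUnit),
          dotp_eq_dotProduct]
    _ ≤ normV V⁻¹ x * normV V⁻¹ (V *ᵥ y) :=
      abs_dotProduct_mulVec_le_normV_mul_normV hV.inv.posSemidef x _
    _ = normV V⁻¹ x * normV V y := by rw [normV_inv_mulVec hV]

end NormV

section DualNorm

variable {m : ℕ} {N : (Fin m → ℝ) → ℝ}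

theorem bddAbove_normV_on_unitBall
    (hN_smul : ∀ (c : ℝ) (u : Fin m → ℝ), N (c • u) = |c| * N u)
    (hN_add : ∀ u w : Fin m → ℝ, N (u + w) ≤ N u + N w)
    (hN_def : ∀ u : Fin m → ℝ, N u = 0 ↔ u = 0)
    (W : Matrix (Fin m) (Fin m) ℝ) :
    BddAbove {r : ℝ | ∃ w : Fin m → ℝ, N w ≤ 1 ∧ r = normV W w} := by
  let p : Seminorm ℝ (Fin m → ℝ) := .of N hN_add hN_smul
  obtain ⟨c, hc, hp⟩ := p.exists_pos_mul_norm_le fun u => (hN_def u).mp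
  have hball : {w | N w ≤ 1} ⊆ Metric.closedBall 0 (1 / c) := fun w hw => by
    rw [mem_closedBall_zero_iff, le_div_iff₀' hc]
    exact (hp w).trans hw
  refine (((isCompact_closedBall 0 (1 / c)).image (continuous_normV W)).bddAbove).mono ?_
  rintro r ⟨w, hw, rfl⟩
  exact ⟨w, hball hw, rfl⟩

variable {V : Matrix (Fin m) (Fin m) ℝ} {C : ℝ}

theorem dotp_le_mul_normV (hV : V.PosDef) (hC : ∀ w, N w ≤ 1 → normV V⁻¹ w ≤ C)
    {v : Fin m → ℝ} (hv : N v ≤ 1) (θ : Fin m → ℝ) : dotp v θ ≤ C * normV V θ :=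
  (le_abs_self _).trans <| (abs_dotp_le_normV_inv_mul_normV hV v θ).trans <|
    mul_le_mul_of_nonneg_right (hC v hv) (normV_nonneg V θ)

theorem dotp_le_dualN (hV : V.PosDef) (hC : ∀ w, N w ≤ 1 → normV V⁻¹ w ≤ C) {v : Fin m → ℝ}
    (hv : N v ≤ 1) (θ : Fin m → ℝ) : dotp v θ ≤ dualN N θ := by
  refine le_csSup ⟨C * normV V θ, ?_⟩ ⟨v, hv, rfl⟩
  rintro r ⟨w, hw, rfl⟩
  exact dotp_le_mul_normV hV hC hw θ

theorem dualN_le_dualN_add (hV : V.PosDef) (hC : ∀ w, N w ≤ 1 → normV V⁻¹ w ≤ C) (h0 : N 0 ≤ 1)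
    (θ θ' : Fin m → ℝ) : dualN N θ ≤ dualN N θ' + C * normV V (θ - θ') := by
  refine csSup_le ⟨_, 0, h0, rfl⟩ ?_
  rintro r ⟨v, hv, rfl⟩
  have hsplit : dotp v θ = dotp v θ' + dotp v (θ - θ') := by
    simp only [dotp_eq_dotProduct, dotProduct_sub, add_sub_cancel]
  change dotp v θ ≤ _
  rw [hsplit]
  exact add_le_add (dotp_le_dualN hV hC hv θ') (dotp_le_mul_normV hV hC hv _)

theorem abs_dualN_sub_dualN_le (hV : V.PosDef) (hC : ∀ w, N w ≤ 1 → normV V⁻¹ w ≤ C)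
    (h0 : N 0 ≤ 1) (θ θ' : Fin m → ℝ) :
    |dualN N θ - dualN N θ'| ≤ C * normV V (θ - θ') := by
  refine abs_sub_le_iff.mpr ⟨?_, ?_⟩ <;> rw [sub_le_iff_le_add']
  · exact dualN_le_dualN_add hV hC h0 θ θ'
  · rw [normV_sub_comm]
    exact dualN_le_dualN_add hV hC h0 θ' θ

end DualNorm

/-- Lipschitz estimate for the robust linear reward: with
`C = sup { ‖w‖_{V⁻¹} : N w ≤ 1 }`, the map `θ ↦ ⟨x̌, θ⟩ − ε·N_*(θ)` is
`(‖x̌‖_{V⁻¹} + ε·C)`-Lipschitz in the `V`-norm. -/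
theorem robust_reward_lipschitz
    (m : ℕ) (N : (Fin m → ℝ) → ℝ)
    (hN_smul : ∀ (c : ℝ) (u : Fin m → ℝ), N (c • u) = |c| * N u)
    (hN_add : ∀ u w : Fin m → ℝ, N (u + w) ≤ N u + N w)
    (hN_def : ∀ u : Fin m → ℝ, N u = 0 ↔ u = 0)
    (V : Matrix (Fin m) (Fin m) ℝ) (hV : V.PosDef)
    (ε : ℝ) (hε : 0 ≤ ε) :
    ∀ xc θ θ' : Fin m → ℝ,
      |(dotp xc θ - ε * dualN N θ) - (dotp xc θ' - ε * dualN N θ')|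
        ≤ (normV V⁻¹ xc
            + ε * sSup {r : ℝ | ∃ w : Fin m → ℝ, N w ≤ 1 ∧ r = normV V⁻¹ w})
          * normV V (θ - θ') := by
  intro xc θ θ'
  set C := sSup {r : ℝ | ∃ w : Fin m → ℝ, N w ≤ 1 ∧ r = normV V⁻¹ w}
  have hC : ∀ w, N w ≤ 1 → normV V⁻¹ w ≤ C := fun w hw =>
    le_csSup (bddAbove_normV_on_unitBall hN_smul hN_add hN_def V⁻¹) ⟨w, hw, rfl⟩
  have h0 : N 0 ≤ 1 := ((hN_def 0).mpr rfl).trans_le zero_le_one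
  have hdot : dotp xc θ - dotp xc θ' = dotp xc (θ - θ') := by
    simp only [dotp_eq_dotProduct, dotProduct_sub]
  calc |(dotp xc θ - ε * dualN N θ) - (dotp xc θ' - ε * dualN N θ')|
      = |dotp xc (θ - θ') - ε * (dualN N θ - dualN N θ')| := by rw [← hdot]; congr 1; ring
    _ ≤ |dotp xc (θ - θ')| + |ε * (dualN N θ - dualN N θ')| := abs_sub _ _
    _ = |dotp xc (θ - θ')| + ε * |dualN N θ - dualN N θ'| := by
      rw [abs_mul, abs_of_nonneg hε]
    _ ≤ normV V⁻¹ xc * normV V (θ - θ') + ε * (C * normV V (θ - θ')) := by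
      gcongr
      · exact abs_dotp_le_normV_inv_mul_normV hV xc _
      · exact abs_dualN_sub_dualN_le hV hC h0 θ θ'
    _ = (normV V⁻¹ xc + ε * C) * normV V (θ - θ') := by ring
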